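/- The fundamental group of the Möbius band is isomorphic to the additive group of integers: π₁(M, m₀) ≅ ℤ, where M is the Möbius band and m₀ is the class of the point (0, 1/2). -/

import Mathlib

/-!
The Möbius band deformation retracts onto its core circle `y = 1/2`: the straight-line homotopy
moving the `y`-coordinate towards `1/2` commutes with the flip `y ↦ 1 - y`, so it descends to
the quotient. Hence the band is homotopy equivalent to `ℝ/ℤ`, whose fundamental group is `ℤ`
because `ℝ → ℝ/ℤ` is a covering map with simply connected total space and deck group `ℤ`.
-/

open scoped unitInterval

/-- The gluing relation on the square `[0,1] × [0,1]`: `(0, y)` is identified with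
`(1, 1 - y)`. The Möbius band is the quotient by the equivalence relation generated by it. -/
def MobiusRel : I × I → I × I → Prop :=
  fun p q => p.1 = 0 ∧ q.1 = 1 ∧ q.2 = unitInterval.symm p.2

/-- The Möbius band, as the quotient of the square `[0,1] × [0,1]` by the equivalence
relation generated by identifying `(0, y)` with `(1, 1 - y)`, with the quotient topology. -/
def MobiusBand : Type := Quot MobiusRel

instance : TopologicalSpace MobiusBand :=
  inferInstanceAs (TopologicalSpace (Quot MobiusRel))

/-- The midpoint `1/2` of the unit interval. -/
noncomputable def half : I := ⟨1 / 2, by norm_num⟩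

/-- The base point of the Möbius band: the class of the point `(0, 1/2)`. -/
noncomputable def mobiusBase : MobiusBand := Quot.mk MobiusRel ((0 : I), half)

noncomputable def ContinuousMap.HomotopyEquiv.fundamentalGroupMulEquiv {X Y : Type*}
    [TopologicalSpace X] [TopologicalSpace Y] (e : ContinuousMap.HomotopyEquiv X Y) (x : X) :
    FundamentalGroup X x ≃* FundamentalGroup Y (e x) :=
  (FundamentalGroupoidFunctor.equivOfHomotopyEquiv e).fullyFaithfulFunctor.mulEquivEnd
    (C := FundamentalGroupoid X) (FundamentalGroupoid.mk x)

noncomputable def AddSubgroup.zmultiplesAddEquivInt {A : Type*} [AddCommGroup A]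
    [IsAddTorsionFree A] {a : A} (ha : a ≠ 0) : ℤ ≃+ AddSubgroup.zmultiples a :=
  (AddMonoidHom.ofInjective (f := zmultiplesHom A a) (smul_left_injective ℤ ha :)).trans
    (AddEquiv.addSubgroupCongr (range_zmultiplesHom a))

noncomputable def AddCircle.fundamentalGroupMulEquivInt {p : ℝ} (hp : p ≠ 0) (x : AddCircle p) :
    FundamentalGroup (AddCircle p) x ≃* Multiplicative ℤ :=
  ((AddCircle.isAddQuotientCoveringMap_coe p).fundamentalGroupEquiv
    ⟨_, (QuotientAddGroup.mk_surjective x).choose_spec⟩).trans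
    (MulOpposite.opMulEquiv.symm.trans (AddSubgroup.zmultiplesAddEquivInt hp).symm.toMultiplicative)

namespace MobiusBand

open unitInterval

def mk (p : I × I) : MobiusBand := Quot.mk MobiusRel p

lemma continuous_mk : Continuous mk := continuous_quot_mk

lemma mk_zero_eq_mk_one (y : I) : mk (0, y) = mk (1, σ y) :=
  Quot.sound ⟨rfl, rfl, rfl⟩

lemma symm_half : σ half = half := by
  ext; norm_num [half]

def toAddCircle : C(MobiusBand, AddCircle (1 : ℝ)) where
  toFun := Quot.lift (fun p => ((p.1 : ℝ) : AddCircle (1 : ℝ))) <| by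
    rintro p q ⟨hp, hq, -⟩
    simp [hp, hq, AddCircle.coe_period]
  continuous_toFun := continuous_quot_lift _ (by fun_prop)

lemma toAddCircle_mk (p : I × I) : toAddCircle (mk p) = (p.1 : ℝ) := rfl

noncomputable def ofAddCircle : C(AddCircle (1 : ℝ), MobiusBand) where
  toFun := AddCircle.liftIco 1 0 fun x => mk (Set.projIcc 0 1 zero_le_one x, half)
  continuous_toFun := by
    refine AddCircle.liftIco_continuous ?_ (continuous_mk.comp (by fun_prop)).continuousOn
    simpa [symm_half] using mk_zero_eq_mk_one half

lemma ofAddCircle_coe_of_mem_Ico {x : ℝ} (hx : x ∈ Set.Ico 0 1) :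
    ofAddCircle x = mk (Set.projIcc 0 1 zero_le_one x, half) :=
  AddCircle.liftIco_zero_coe_apply (f := fun x => mk (Set.projIcc 0 1 zero_le_one x, half)) hx

lemma ofAddCircle_coe (x : I) : ofAddCircle (x : ℝ) = mk (x, half) := by
  rcases eq_or_lt_of_le x.2.2 with hx | hx
  · obtain rfl : x = 1 := Subtype.ext hx
    rw [Set.Icc.coe_one, AddCircle.coe_period, ← AddCircle.coe_zero,
      ofAddCircle_coe_of_mem_Ico (by simp)]
    simpa [symm_half] using mk_zero_eq_mk_one half
  · rw [ofAddCircle_coe_of_mem_Ico ⟨x.2.1, hx⟩, Set.projIcc_val]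

lemma toAddCircle_comp_ofAddCircle : toAddCircle.comp ofAddCircle = .id _ := by
  ext z
  obtain ⟨x, hx, rfl⟩ : z ∈ (↑) '' Set.Ico (0 : ℝ) (0 + 1) := by
    rw [AddCircle.coe_image_Ico_eq]; trivial
  rw [zero_add] at hx
  simp [ofAddCircle_coe_of_mem_Ico hx, toAddCircle_mk,
    Set.projIcc_of_mem zero_le_one (Set.Ico_subset_Icc_self hx)]

noncomputable def lineFromHalf (t y : I) : I :=
  ⟨(1 - t) * (1 / 2) + t * y, by
    constructor <;> nlinarith [t.2.1, t.2.2, y.2.1, y.2.2]⟩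

lemma lineFromHalf_symm (t y : I) : lineFromHalf t (σ y) = σ (lineFromHalf t y) := by
  ext; simp only [lineFromHalf, coe_symm_eq]; ring

noncomputable def retractionHomotopy :
    (ofAddCircle.comp toAddCircle).Homotopy (.id MobiusBand) where
  toFun q := Quot.liftOn q.2 (fun p => mk (p.1, lineFromHalf q.1 p.2)) <| by
    rintro p p' ⟨hp, hp', hy⟩
    rw [← Prod.mk.eta (p := p), ← Prod.mk.eta (p := p'), hp, hp', hy, lineFromHalf_symm]
    exact mk_zero_eq_mk_one _
  continuous_toFun := isQuotientMap_quot_mk.continuous_lift_prod_right <|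
    continuous_mk.comp (by unfold lineFromHalf; fun_prop)
  map_zero_left := by
    rintro ⟨x, y⟩
    show mk (x, lineFromHalf 0 y) = ofAddCircle (toAddCircle (mk (x, y)))
    rw [toAddCircle_mk, ofAddCircle_coe]
    congr
    ext; simp [lineFromHalf, half]
  map_one_left := by
    rintro ⟨x, y⟩
    show mk (x, lineFromHalf 1 y) = mk (x, y)
    congr
    ext; simp [lineFromHalf]

noncomputable def homotopyEquivAddCircle :
    ContinuousMap.HomotopyEquiv MobiusBand (AddCircle (1 : ℝ)) where
  toFun := toAddCircle
  invFun := ofAddCircle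
  left_inv := ⟨retractionHomotopy⟩
  right_inv := by rw [toAddCircle_comp_ofAddCircle]

end MobiusBand

/-- The fundamental group of the Möbius band (based at the class of `(0, 1/2)`) is
isomorphic to the additive group of integers. -/
theorem mobiusBand_fundamentalGroup_iso_int :
    Nonempty (FundamentalGroup MobiusBand mobiusBase ≃* Multiplicative ℤ) :=
  ⟨(MobiusBand.homotopyEquivAddCircle.fundamentalGroupMulEquiv mobiusBase).trans
    (AddCircle.fundamentalGroupMulEquivInt one_ne_zero _)⟩
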